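/- Let h : E^d → ℝ be nonnegative, let p ≥ 2 be an integer with 1/p ≤ θ, and set n_k = p^k. If (1/γ_n) · max{ h(X_i) : i ≤ n, i ∈ S_θ^d, coordinates distinct } → 0 almost surely as n → ∞ in the sector S_θ^d, then for every ε > 0, Σ_{k=1}^∞ P{ max{ h(X_i) : θ n_k < i_l ≤ n_k for all l, coordinates of i distinct } > ε γ_{(n_k,…,n_k)} } < ∞. -/

import Mathlib

open MeasureTheory ProbabilityTheory Filter Finset
open scoped Topology ENNReal

noncomputable section

/-- The sector `S_θ^d ⊆ ℤ_+^d` (positive integers modelled by `ℕ+`). -/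
def sector (d : ℕ) (θ : ℝ) : Set (Fin d → ℕ+) :=
  {i | ∀ l k : Fin d, θ < (i l : ℝ) / (i k : ℝ) ∧ (i l : ℝ) / (i k : ℝ) < 1 / θ}

/-- The filter of `n → ∞` within the sector: every coordinate tends to infinity
(equivalently `min_j n_j → ∞`) and `n` ranges in the sector. -/
def sectorFilter (d : ℕ) (θ : ℝ) : Filter (Fin d → ℕ+) :=
  atTop ⊓ Filter.principal (sector d θ)

/-- The diagonal multi-index `(m, …, m)`. -/
def diag (d : ℕ) (m : ℕ+) : Fin d → ℕ+ := fun _ => m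

open scoped Classical in
/-- Multi-indices `i ≤ n` lying in the sector, with pairwise distinct coordinates. -/
def secIdx (d : ℕ) (θ : ℝ) (n : Fin d → ℕ+) : Finset (Fin d → ℕ+) :=
  (Finset.Icc 1 n).filter fun i => i ∈ sector d θ ∧ Function.Injective i

open scoped Classical in
/-- Multi-indices `i ≤ n` lying in the sector (coordinates may coincide). -/
def secIdxAll (d : ℕ) (θ : ℝ) (n : Fin d → ℕ+) : Finset (Fin d → ℕ+) :=
  (Finset.Icc 1 n).filter fun i => i ∈ sector d θ

open scoped Classical in
/-- Multi-indices `i ≤ n` with pairwise distinct coordinates. -/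
def cubeIdx (d : ℕ) (n : Fin d → ℕ+) : Finset (Fin d → ℕ+) :=
  (Finset.Icc 1 n).filter fun i => Function.Injective i

/-- All multi-indices `i ≤ n`. -/
def cubeIdxAll (d : ℕ) (n : Fin d → ℕ+) : Finset (Fin d → ℕ+) := Finset.Icc 1 n

open scoped Classical in
/-- The block `{i : θ·m < i_l ≤ m for all l}`, with pairwise distinct coordinates. -/
def blockIdx (d : ℕ) (θ : ℝ) (m : ℕ+) : Finset (Fin d → ℕ+) :=
  (Finset.Icc 1 (diag d m)).filter fun i =>
    (∀ l, θ * (m : ℝ) < (i l : ℝ)) ∧ Function.Injective i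

open scoped Classical in
/-- The cube `{i : i_l ≤ (1-θ)·m for all l}`, with pairwise distinct coordinates. -/
def smallCube (d : ℕ) (θ : ℝ) (m : ℕ+) : Finset (Fin d → ℕ+) :=
  (Finset.Icc 1 (diag d m)).filter fun i =>
    (∀ l, (i l : ℝ) ≤ (1 - θ) * (m : ℝ)) ∧ Function.Injective i

/-- Maximum of `f` over a finite index set (`0` for the empty set; used for nonnegative `f`). -/
def finMax {ι : Type*} (s : Finset ι) (f : ι → ℝ) : ℝ := s.fold max 0 f

lemma finMax_nonneg {ι : Type*} (s : Finset ι) (f : ι → ℝ) : 0 ≤ finMax s f :=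
  (Finset.le_fold_max 0).2 (Or.inl le_rfl)

lemma le_finMax {ι : Type*} {s : Finset ι} (f : ι → ℝ) {i : ι} (hi : i ∈ s) :
    f i ≤ finMax s f :=
  (Finset.le_fold_max (f i)).2 (Or.inr ⟨i, hi, le_rfl⟩)

lemma finMax_le_of_subset {ι : Type*} {s t : Finset ι} (f : ι → ℝ) (hst : s ⊆ t) :
    finMax s f ≤ finMax t f :=
  (Finset.fold_max_le (finMax t f)).2 ⟨finMax_nonneg t f, fun i hi => le_finMax f (hst hi)⟩

lemma measurable_finMax {ι Ω : Type*} {m : MeasurableSpace Ω} (s : Finset ι) (f : ι → Ω → ℝ)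
    (hf : ∀ i ∈ s, Measurable[m] (f i)) :
    Measurable[m] (fun ω => finMax s (fun i => f i ω)) := by
  classical
  induction s using Finset.cons_induction with
  | empty => simp only [finMax, Finset.fold_empty]; exact @measurable_const ℝ Ω _ m 0
  | cons a s ha ih =>
    have heq : (fun ω => finMax (Finset.cons a s ha) fun i => f i ω)
        = fun ω => max (f a ω) (finMax s fun i => f i ω) := by
      funext ω; simp [finMax, Finset.fold_cons]
    rw [heq]
    exact Measurable.max (hf a (Finset.mem_cons_self a s))
      (ih fun i hi => hf i (Finset.mem_cons_of_mem hi))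

/-- If the sectorial maxima converge a.s. then the block-maxima tail probabilities along
`n_k = p^k` are summable. -/
theorem summable_block_max_of_sectorial_max
{E Ω : Type*} [MeasurableSpace E] [MeasurableSpace Ω]
    (μ : Measure Ω) [IsProbabilityMeasure μ]
    (d : ℕ) (hd : 1 ≤ d) (θ : ℝ) (hθ0 : 0 < θ) (hθ1 : θ < 1)
(X : ℕ+ → Ω → E) (hXm : ∀ i, Measurable (X i))
    (hXind : iIndepFun X μ)
    (hXid : ∀ i j : ℕ+, IdentDistrib (X i) (X j) μ μ)
(h : (Fin d → E) → ℝ) (hhm : Measurable h)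
    (hsym : ∀ (σ : Equiv.Perm (Fin d)) (x : Fin d → E), h (x ∘ σ) = h x)
    (hh0 : ∀ x, 0 ≤ h x)
(γ : (Fin d → ℕ+) → ℝ) (hγpos : ∀ n, 0 < γ n) (hγmono : Monotone γ)
    (C : ℝ) (hC : 0 < C) (hγdbl : ∀ n, γ (fun j => 2 * n j) ≤ C * γ n)
    (hγ3 : ∀ l : ℕ, 1 ≤ l →
      (∑' k : ℕ, (2 : ℝ) ^ (d * (l + k)) / (γ (diag d (2 ^ (l + k)))) ^ 2)
        ≤ C * (2 : ℝ) ^ (d * l) / (γ (diag d (2 ^ l))) ^ 2)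
    (p : ℕ+) (hp : 2 ≤ p) (hpθ : 1 / (p : ℝ) ≤ θ)
    (hconv : ∀ᵐ ω ∂μ, Tendsto
      (fun n => finMax (secIdx d θ n) (fun i => h fun l => X (i l) ω) / γ n)
      (sectorFilter d θ) (𝓝 0)) :
    ∀ ε : ℝ, 0 < ε →
      (∑' k : ℕ, μ {ω | ε * γ (diag d (p ^ (k + 1))) <
        finMax (blockIdx d θ (p ^ (k + 1))) (fun i => h fun l => X (i l) ω)}) < ⊤ := by
  classical
  intro ε hε
  set A : ℕ → Set Ω := fun k =>
    {ω | ε * γ (diag d (p ^ (k + 1))) <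
        finMax (blockIdx d θ (p ^ (k + 1))) (fun i => h fun l => X (i l) ω)} with hAdef
  set T : ℕ → Finset ℕ+ := fun k => Finset.Ioc (p ^ k) (p ^ (k + 1)) with hTdef
  have hppos : (0:ℝ) < ((p : ℕ) : ℝ) := by exact_mod_cast p.pos
  have hcast : ∀ j : ℕ, (((p ^ j : ℕ+) : ℕ) : ℝ) = ((p : ℕ) : ℝ) ^ j := by
    intro j; rw [PNat.pow_coe]; push_cast; ring
  -- coordinates of block indices lie in `T k`
  have hcoord : ∀ (k : ℕ) (i : Fin d → ℕ+), i ∈ blockIdx d θ (p ^ (k + 1)) →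
      ∀ l, i l ∈ T k := by
    intro k i hi l
    simp only [blockIdx, Finset.mem_filter, Finset.mem_Icc] at hi
    obtain ⟨⟨_, hi2⟩, hlow, _⟩ := hi
    simp only [hTdef, Finset.mem_Ioc]
    refine ⟨?_, hi2 l⟩
    rw [← PNat.coe_lt_coe, ← Nat.cast_lt (α := ℝ)]
    refine lt_of_le_of_lt ?_ (hlow l)
    rw [hcast]
    calc ((p : ℕ) : ℝ) ^ k = (1 / ((p : ℕ) : ℝ)) * ((p : ℕ) : ℝ) ^ (k + 1) := by
          field_simp; ring
      _ ≤ θ * ((p : ℕ) : ℝ) ^ (k + 1) :=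
          mul_le_mul_of_nonneg_right hpθ (by positivity)
      _ = θ * (((p ^ (k + 1) : ℕ+) : ℕ) : ℝ) := by rw [hcast]
  -- block indices are sectorial indices for the diagonal point
  have hsub : ∀ m : ℕ+, blockIdx d θ m ⊆ secIdx d θ (diag d m) := by
    intro m i hi
    simp only [blockIdx, Finset.mem_filter, Finset.mem_Icc] at hi
    obtain ⟨⟨hi1, hi2⟩, hlow, hinj⟩ := hi
    simp only [secIdx, Finset.mem_filter, Finset.mem_Icc, sector, Set.mem_setOf_eq]
    refine ⟨⟨hi1, hi2⟩, fun l k' => ?_, hinj⟩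
    have hup : ∀ l', (i l' : ℝ) ≤ ((m : ℕ) : ℝ) := fun l' => by
      exact_mod_cast (PNat.coe_le_coe _ _).2 (hi2 l')
    have hpos : ∀ l', (0:ℝ) < (i l' : ℝ) := fun l' => by exact_mod_cast (i l').pos
    constructor
    · rw [lt_div_iff₀ (hpos k')]
      calc θ * (i k' : ℝ) ≤ θ * ((m : ℕ) : ℝ) :=
            mul_le_mul_of_nonneg_left (hup k') hθ0.le
        _ < i l := hlow l
    · rw [div_lt_div_iff₀ (hpos k') hθ0, one_mul]
      calc (i l : ℝ) * θ ≤ ((m : ℕ) : ℝ) * θ := mul_le_mul_of_nonneg_right (hup l) hθ0.le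
        _ = θ * ((m : ℕ) : ℝ) := mul_comm _ _
        _ < i k' := hlow k'
  -- measurability of the events
  have hAmeasM : ∀ (k : ℕ) (M : MeasurableSpace Ω), (∀ j ∈ T k, Measurable[M] (X j)) →
      MeasurableSet[M] (A k) := by
    intro k M hM
    have hg : Measurable[M] fun ω =>
        finMax (blockIdx d θ (p ^ (k + 1))) (fun i => h fun l => X (i l) ω) := by
      apply measurable_finMax
      intro i hi
      exact hhm.comp (measurable_pi_lambda _ fun l => hM _ (hcoord k i hi l))
    exact measurableSet_lt measurable_const hg
  have hAm : ∀ k, MeasurableSet (A k) := fun k => hAmeasM k _ (fun j _ => hXm j)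
  -- disjointness of the blocks of indices
  have hTdisj : ∀ {k k' : ℕ}, k < k' → Disjoint (↑(T k) : Set ℕ+) (↑(T k')) := by
    intro k k' hkk'
    rw [Set.disjoint_left]
    intro j hj hj'
    simp only [hTdef, Finset.coe_Ioc, Set.mem_Ioc] at hj hj'
    have hle : p ^ (k + 1) ≤ p ^ k' := by
      rw [← PNat.coe_le_coe, PNat.pow_coe, PNat.pow_coe]
      exact Nat.pow_le_pow_right p.pos hkk'
    exact absurd (hj.2.trans hle) (not_le.2 hj'.1)
  -- measurability with respect to grouped σ-algebras
  have hXmeasM : ∀ (S : Set ℕ+) {j : ℕ+}, j ∈ S →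
      Measurable[⨆ j ∈ S, MeasurableSpace.comap (X j) ‹MeasurableSpace E›] (X j) := by
    intro S j hj
    have h1 : Measurable[MeasurableSpace.comap (X j) ‹MeasurableSpace E›] (X j) :=
      fun B hB => ⟨B, hB, rfl⟩
    exact h1.mono (le_biSup (fun j => MeasurableSpace.comap (X j) ‹MeasurableSpace E›) hj) le_rfl
  -- the product identity
  have key : ∀ s : Finset ℕ, μ (⋂ k ∈ s, A k) = ∏ k ∈ s, μ (A k) := by
    intro s
    induction s using Finset.cons_induction with
    | empty => simp
    | cons k0 t hk0 ih =>
      have hdisj : Disjoint (↑(T k0) : Set ℕ+) (⋃ k ∈ t, (↑(T k) : Set ℕ+)) := by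
        rw [Set.disjoint_iUnion_right]
        intro k
        rw [Set.disjoint_iUnion_right]
        intro hk
        rcases lt_or_gt_of_ne (fun hkk : k0 = k => hk0 (hkk ▸ hk)) with hlt | hlt
        · exact hTdisj hlt
        · exact (hTdisj hlt).symm
      have hindep := indep_iSup_of_disjoint (fun j => (hXm j).comap_le) hXind.iIndep hdisj
      have h1 : MeasurableSet[⨆ j ∈ (↑(T k0) : Set ℕ+),
          MeasurableSpace.comap (X j) ‹MeasurableSpace E›] (A k0) :=
        hAmeasM k0 _ (fun j hj => hXmeasM _ (Finset.mem_coe.2 hj))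
      have h2 : MeasurableSet[⨆ j ∈ (⋃ k ∈ t, (↑(T k) : Set ℕ+)),
          MeasurableSpace.comap (X j) ‹MeasurableSpace E›] (⋂ k ∈ t, A k) := by
        refine Finset.measurableSet_biInter _ fun k hk => ?_
        refine hAmeasM k _ fun j hj => ?_
        exact hXmeasM _ (Set.mem_iUnion₂.2 ⟨k, hk, Finset.mem_coe.2 hj⟩)
      have hmul := (Indep_iff _ _ _).1 hindep _ _ h1 h2
      rw [Finset.cons_eq_insert, Finset.set_biInter_insert, Finset.prod_insert hk0, hmul, ih]
  -- mutual independence of the events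
  have hiIndep : iIndepSet A μ := by
    rw [iIndepSet_iff_iIndep]
    refine iIndepSets.iIndep (fun k => ?_) (fun k => {A k})
      (fun k => IsPiSystem.singleton _) (fun k => rfl) ?_
    · refine MeasurableSpace.generateFrom_le ?_
      rintro s hs
      rw [Set.mem_singleton_iff] at hs
      rw [hs]; exact hAm k
    · rw [iIndepSets_iff]
      intro s f hf
      have hfA : ∀ k ∈ s, f k = A k := by
        intro k hk
        have := hf k hk
        rwa [Set.mem_singleton_iff] at this
      calc μ (⋂ k ∈ s, f k) = μ (⋂ k ∈ s, A k) := by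
            congr 1; exact Set.iInter₂_congr hfA
        _ = ∏ k ∈ s, μ (A k) := key s
        _ = ∏ k ∈ s, μ (f k) := Finset.prod_congr rfl fun k hk => by rw [hfA k hk]
  -- the diagonal sequence tends to infinity in the sector
  have hdiag_sector : ∀ m : ℕ+, diag d m ∈ sector d θ := by
    intro m l k'
    have hm0 : (0:ℝ) < ((m : ℕ) : ℝ) := by exact_mod_cast m.pos
    simp only [_root_.diag]
    rw [div_self hm0.ne']
    exact ⟨hθ1, one_lt_one_div hθ0 hθ1⟩
  have hφ : Tendsto (fun k : ℕ => diag d (p ^ (k + 1))) atTop (sectorFilter d θ) := by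
    rw [sectorFilter]
    refine Filter.tendsto_inf.2 ⟨?_,
      Filter.tendsto_principal.2 (Filter.Eventually.of_forall fun k => hdiag_sector _)⟩
    rw [tendsto_atTop]
    intro b
    obtain ⟨N, hN⟩ : ∃ N : ℕ, ∀ l, (b l : ℕ) ≤ N :=
      ⟨Finset.univ.sup (fun l => (b l : ℕ)), fun l => Finset.le_sup (f := fun l => ((b l : ℕ))) (Finset.mem_univ l)⟩
    filter_upwards [Filter.eventually_ge_atTop N] with k hk l
    show b l ≤ p ^ (k + 1)
    rw [← PNat.coe_le_coe, PNat.pow_coe]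
    refine le_of_lt ?_
    calc (b l : ℕ) ≤ N := hN l
      _ ≤ k := hk
      _ < 2 ^ (k + 1) := lt_of_lt_of_le (Nat.lt_two_pow_self (n := k))
          (Nat.pow_le_pow_right (by norm_num) (Nat.le_succ k))
      _ ≤ (p : ℕ) ^ (k + 1) := Nat.pow_le_pow_left (by exact_mod_cast hp) _
  -- a.e. the events occur only finitely often
  have hae : ∀ᵐ ω ∂μ, ω ∉ limsup A atTop := by
    filter_upwards [hconv] with ω hω
    have h2 := hω.comp hφ
    have h3 := h2.eventually_lt_const hε
    rw [mem_limsup_iff_frequently_mem, Filter.not_frequently]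
    filter_upwards [h3] with k hk
    simp only [hAdef, Set.mem_setOf_eq, not_lt]
    simp only [Function.comp_apply] at hk
    rw [div_lt_iff₀ (hγpos _)] at hk
    exact le_of_lt (lt_of_le_of_lt (finMax_le_of_subset _ (hsub (p ^ (k + 1)))) hk)
  have hlim0 : μ (limsup A atTop) = 0 := measure_eq_zero_iff_ae_notMem.2 hae
  rw [lt_top_iff_ne_top]
  intro htop
  have h1 := measure_limsup_eq_one hAm hiIndep htop
  rw [hlim0] at h1
  exact zero_ne_one h1
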